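/- Path sampling representation of the log Bayes factor for factor models (Equations (2.2)–(2.3) applied to the PAMP). Let π be a probability measure on Θ such that (i) the function θ ↦ Q(θ,Y) is π-integrable, and (ii) there exists M < ∞ with f(Y|θ,t) ≤ M for all t ∈ [0,1] and π-almost every θ. Then log z₁ − log z₀ = ∫₀¹ E_t(U) dt, where z₁ and z₀ are the marginals of Y under the h-factor model M₁ (t = 1) and the (h−1)-factor model M₀ (t = 0), so the left side is the log Bayes factor of M₁ versus M₀, and E_t(U) = (∫_Θ U(θ,Y,t) f(Y|θ,t) dπ(θ)) / z_t. -/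

import Mathlib

/-!
Differentiating under the integral sign: `∂ₜ f(Y|θ,t) = U(θ,Y,t) f(Y|θ,t)`, and on `[0,1]` this
derivative is dominated by `Q(θ,Y) M`, which is `π`-integrable. Hence `z_t` is differentiable with
`z_t' = ∫ U f dπ`; as `f > 0` we have `z_t > 0`, so `(log z_t)' = E_t(U)`, which is continuous on
`[0,1]` by dominated convergence, and the fundamental theorem of calculus gives the identity.
-/

open MeasureTheory Real Filter Set

/-- The parameter space Θ of a factor model with `p` outcomes, `k+1` factors and `n`
observations: loadings Λ ∈ ℝ^{p×(k+1)}, variances σ² ∈ (0,∞)^p and latent factors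
η = (η₁,…,η_n), ηᵢ ∈ ℝ^{k+1}. -/
abbrev FactorParam (p k n : ℕ) : Type :=
  Matrix (Fin p) (Fin (k + 1)) ℝ × {σ : Fin p → ℝ // ∀ j, 0 < σ j} ×
    (Fin n → Fin (k + 1) → ℝ)

/-- Λ_t : the matrix obtained from Λ by multiplying its last column by `t` (PAMP). -/
def pathLam {p k : ℕ} (t : ℝ) (Λ : Matrix (Fin p) (Fin (k + 1)) ℝ) :
    Matrix (Fin p) (Fin (k + 1)) ℝ :=
  fun j l => if l = Fin.last k then t * Λ j l else Λ j l

/-- The factor model likelihood f(Y|θ) = ∏ᵢ∏ⱼ (2πσⱼ²)^{-1/2} exp(−(y_{ij} − (Ληᵢ)_j)²/(2σⱼ²)). -/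
noncomputable def lik {p k n : ℕ} (Y : Fin n → Fin p → ℝ) (θ : FactorParam p k n) : ℝ :=
  ∏ i : Fin n, ∏ j : Fin p,
    (2 * π * θ.2.1.1 j) ^ (-(1 : ℝ) / 2) *
      Real.exp (-(Y i j - ∑ l, θ.1 j l * θ.2.2 i l) ^ 2 / (2 * θ.2.1.1 j))

/-- The likelihood along the parametric arithmetic mean path: f(Y|θ,t) = f(Y|(Λ_t,σ²,η)). -/
noncomputable def pathLik {p k n : ℕ} (Y : Fin n → Fin p → ℝ) (θ : FactorParam p k n)
    (t : ℝ) : ℝ :=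
  lik Y (pathLam t θ.1, θ.2)

/-- The score function U(θ,Y,t) = ∑ᵢ∑ⱼ (y_{ij} − (Λ_t ηᵢ)_j) σⱼ^{−2} Λ_{jk} η_{ik}. -/
noncomputable def scoreU {p k n : ℕ} (Y : Fin n → Fin p → ℝ) (θ : FactorParam p k n)
    (t : ℝ) : ℝ :=
  ∑ i : Fin n, ∑ j : Fin p,
    (Y i j - ∑ l, pathLam t θ.1 j l * θ.2.2 i l) * (θ.2.1.1 j)⁻¹ *
      (θ.1 j (Fin.last k) * θ.2.2 i (Fin.last k))

/-- The dominating function Q(θ,Y), free of t. -/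
noncomputable def Qbound {p k n : ℕ} (Y : Fin n → Fin p → ℝ) (θ : FactorParam p k n) : ℝ :=
  ∑ i : Fin n, ∑ j : Fin p,
    (|Y i j| + ∑ l, |θ.1 j l| * |θ.2.2 i l|) * (θ.2.1.1 j)⁻¹ *
      (|θ.1 j (Fin.last k)| * |θ.2.2 i (Fin.last k)|)

/-- The Borel-type product σ-algebra on the space of loading matrices. -/
instance {p k : ℕ} : MeasurableSpace (Matrix (Fin p) (Fin (k + 1)) ℝ) :=
  MeasurableSpace.pi

theorem log_sub_log_eq_intervalIntegral_div {z z' : ℝ → ℝ} {a b : ℝ} (hab : a ≤ b)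
    (hz : ContinuousOn z (Icc a b)) (hz_pos : ∀ t ∈ Icc a b, 0 < z t)
    (hderiv : ∀ t ∈ Ioo a b, HasDerivAt z (z' t) t) (hz' : ContinuousOn z' (Icc a b)) :
    log (z b) - log (z a) = ∫ t in a..b, z' t / z t := by
  have hz_ne : ∀ t ∈ Icc a b, z t ≠ 0 := fun t ht => (hz_pos t ht).ne'
  rw [intervalIntegral.integral_eq_sub_of_hasDerivAt_of_le hab (hz.log hz_ne)
    (fun t ht => (hderiv t ht).log (hz_ne t (Ioo_subset_Icc_self ht)))
    ((hz'.div hz hz_ne).intervalIntegrable_of_Icc hab)]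

section PathSampling

open scoped Topology

variable {α : Type*} [MeasurableSpace α] {μ : Measure α}

theorem integral_pos_of_ae_pos [NeZero μ] {f : α → ℝ} (hfi : Integrable f μ)
    (hf : ∀ᵐ x ∂μ, 0 < f x) : 0 < ∫ x, f x ∂μ := by
  rw [integral_pos_iff_support_of_nonneg_ae (hf.mono fun _ hx => hx.le) hfi, pos_iff_ne_zero]
  intro hsupp
  have : (ae μ).NeBot := ae_neBot.2 (NeZero.ne μ)
  obtain ⟨x, hx_pos, hx_notMem⟩ := (hf.and (measure_eq_zero_iff_ae_notMem.1 hsupp)).exists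
  exact hx_notMem hx_pos.ne'

theorem log_integral_sub_log_integral_eq_intervalIntegral [NeZero μ] {F F' : ℝ → α → ℝ}
    {G H : α → ℝ} {a b : ℝ} (hab : a ≤ b)
    (hF_meas : ∀ t ∈ Icc a b, AEStronglyMeasurable (F t) μ)
    (hF'_meas : ∀ t ∈ Icc a b, AEStronglyMeasurable (F' t) μ)
    (hF_pos : ∀ t ∈ Icc a b, ∀ᵐ x ∂μ, 0 < F t x)
    (hF_le : ∀ᵐ x ∂μ, ∀ t ∈ Icc a b, ‖F t x‖ ≤ G x) (hG : Integrable G μ)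
    (hF'_le : ∀ᵐ x ∂μ, ∀ t ∈ Icc a b, ‖F' t x‖ ≤ H x) (hH : Integrable H μ)
    (hF_deriv : ∀ᵐ x ∂μ, ∀ t ∈ Icc a b, HasDerivAt (F · x) (F' t x) t)
    (hF'_cont : ∀ᵐ x ∂μ, ContinuousOn (F' · x) (Icc a b)) :
    log (∫ x, F b x ∂μ) - log (∫ x, F a x ∂μ) =
      ∫ t in a..b, (∫ x, F' t x ∂μ) / ∫ x, F t x ∂μ := by
  have hF_int : ∀ t ∈ Icc a b, Integrable (F t) μ := fun t ht =>
    hG.mono' (hF_meas t ht) (hF_le.mono fun x hx => hx t ht)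
  refine log_sub_log_eq_intervalIntegral_div hab ?_
    (fun t ht => integral_pos_of_ae_pos (hF_int t ht) (hF_pos t ht)) ?_ ?_
  · exact continuousOn_of_dominated hF_meas (fun t ht => hF_le.mono fun x hx => hx t ht) hG
      (hF_deriv.mono fun x hx t ht => (hx t ht).continuousAt.continuousWithinAt)
  · intro t ht
    have hIoo : Ioo a b ∈ 𝓝 t := isOpen_Ioo.mem_nhds ht
    exact (hasDerivAt_integral_of_dominated_loc_of_deriv_le hIoo
      (eventually_of_mem hIoo fun s hs => hF_meas s (Ioo_subset_Icc_self hs))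
      (hF_int t (Ioo_subset_Icc_self ht)) (hF'_meas t (Ioo_subset_Icc_self ht))
      (hF'_le.mono fun x hx s hs => hx s (Ioo_subset_Icc_self hs)) hH
      (hF_deriv.mono fun x hx s hs => hx s (Ioo_subset_Icc_self hs))).2
  · exact continuousOn_of_dominated hF'_meas (fun t ht => hF'_le.mono fun x hx => hx t ht) hH
      hF'_cont

end PathSampling

section FactorModel

variable {p k n : ℕ}

theorem hasDerivAt_pathLam_apply (Λ : Matrix (Fin p) (Fin (k + 1)) ℝ) (j : Fin p)
    (l : Fin (k + 1)) (t : ℝ) :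
    HasDerivAt (fun t => pathLam t Λ j l) (if l = Fin.last k then Λ j l else 0) t := by
  unfold pathLam
  split_ifs
  · simpa using (hasDerivAt_id t).mul_const (Λ j l)
  · exact hasDerivAt_const t _

theorem abs_pathLam_apply_le {t : ℝ} (ht : |t| ≤ 1) (Λ : Matrix (Fin p) (Fin (k + 1)) ℝ)
    (j : Fin p) (l : Fin (k + 1)) : |pathLam t Λ j l| ≤ |Λ j l| := by
  unfold pathLam
  split_ifs
  · rw [abs_mul]
    exact mul_le_of_le_one_left (abs_nonneg _) ht
  · rfl

@[fun_prop]
theorem measurable_pathLam (t : ℝ) : Measurable (pathLam (p := p) (k := k) t) := by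
  unfold pathLam
  refine measurable_pi_lambda _ fun j => measurable_pi_lambda _ fun l => ?_
  split_ifs <;> fun_prop

@[fun_prop]
theorem continuous_pathLam (Λ : Matrix (Fin p) (Fin (k + 1)) ℝ) :
    Continuous fun t : ℝ => pathLam t Λ := by
  unfold pathLam
  refine continuous_pi fun j => continuous_pi fun l => ?_
  split_ifs <;> fun_prop

@[fun_prop]
theorem measurable_variance (j : Fin p) :
    Measurable fun θ : FactorParam p k n => (θ.2.1 : Fin p → ℝ) j :=
  (measurable_pi_apply j).comp (measurable_subtype_coe.comp (measurable_fst.comp measurable_snd))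

def pathResidual (Y : Fin n → Fin p → ℝ) (θ : FactorParam p k n) (t : ℝ) (i : Fin n)
    (j : Fin p) : ℝ :=
  Y i j - ∑ l, pathLam t θ.1 j l * θ.2.2 i l

theorem hasDerivAt_pathResidual (Y : Fin n → Fin p → ℝ) (θ : FactorParam p k n) (i : Fin n)
    (j : Fin p) (t : ℝ) :
    HasDerivAt (pathResidual Y θ · i j) (-(θ.1 j (Fin.last k) * θ.2.2 i (Fin.last k))) t := by
  have hsum := HasDerivAt.fun_sum fun l (_ : l ∈ Finset.univ) =>
    (hasDerivAt_pathLam_apply θ.1 j l t).mul_const (θ.2.2 i l)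
  simp only [ite_mul, zero_mul, Finset.sum_ite_eq', Finset.mem_univ, if_true] at hsum
  exact hsum.const_sub (Y i j)

theorem abs_pathResidual_le (Y : Fin n → Fin p → ℝ) (θ : FactorParam p k n) {t : ℝ}
    (ht : |t| ≤ 1) (i : Fin n) (j : Fin p) :
    |pathResidual Y θ t i j| ≤ |Y i j| + ∑ l, |θ.1 j l| * |θ.2.2 i l| := by
  refine (abs_sub _ _).trans ?_
  gcongr
  refine (Finset.abs_sum_le_sum_abs _ _).trans ?_
  gcongr with l
  rw [abs_mul]
  exact mul_le_mul_of_nonneg_right (abs_pathLam_apply_le ht θ.1 j l) (abs_nonneg _)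

theorem pathLik_eq_mul_exp (Y : Fin n → Fin p → ℝ) (θ : FactorParam p k n) (t : ℝ) :
    pathLik Y θ t = (∏ _i : Fin n, ∏ j, (2 * π * θ.2.1.1 j) ^ (-(1 : ℝ) / 2)) *
      exp (∑ i, ∑ j, -pathResidual Y θ t i j ^ 2 / (2 * θ.2.1.1 j)) := by
  simp only [pathLik, lik, pathResidual, Finset.prod_mul_distrib, exp_sum]

theorem pathLik_pos (Y : Fin n → Fin p → ℝ) (θ : FactorParam p k n) (t : ℝ) :
    0 < pathLik Y θ t := by
  rw [pathLik_eq_mul_exp]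
  refine mul_pos (Finset.prod_pos fun i _ => Finset.prod_pos fun j _ => ?_) (exp_pos _)
  have := θ.2.1.2 j
  positivity

theorem hasDerivAt_pathLik (Y : Fin n → Fin p → ℝ) (θ : FactorParam p k n) (t : ℝ) :
    HasDerivAt (pathLik Y θ ·) (scoreU Y θ t * pathLik Y θ t) t := by
  have hexponent : HasDerivAt (fun t => ∑ i, ∑ j, -pathResidual Y θ t i j ^ 2 / (2 * θ.2.1.1 j))
      (scoreU Y θ t) t := by
    refine HasDerivAt.fun_sum fun i _ => HasDerivAt.fun_sum fun j _ => ?_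
    refine (((hasDerivAt_pathResidual Y θ i j t).pow 2).neg.div_const _).congr_deriv ?_
    change _ = pathResidual Y θ t i j * _ * _
    have := (θ.2.1.2 j).ne'
    field_simp
    ring
  simp only [pathLik_eq_mul_exp Y θ]
  exact (hexponent.exp.const_mul _).congr_deriv (by ring)

theorem continuous_pathLik (Y : Fin n → Fin p → ℝ) (θ : FactorParam p k n) :
    Continuous (pathLik Y θ ·) :=
  continuous_iff_continuousAt.2 fun t => (hasDerivAt_pathLik Y θ t).continuousAt

theorem continuous_scoreU (Y : Fin n → Fin p → ℝ) (θ : FactorParam p k n) :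
    Continuous (scoreU Y θ ·) := by
  unfold scoreU
  fun_prop

theorem abs_scoreU_le_Qbound (Y : Fin n → Fin p → ℝ) (θ : FactorParam p k n) {t : ℝ}
    (ht : |t| ≤ 1) : |scoreU Y θ t| ≤ Qbound Y θ := by
  refine (Finset.abs_sum_le_sum_abs _ _).trans (Finset.sum_le_sum fun i _ => ?_)
  refine (Finset.abs_sum_le_sum_abs _ _).trans (Finset.sum_le_sum fun j _ => ?_)
  have hσ := θ.2.1.2 j
  rw [abs_mul, abs_mul, abs_mul, abs_inv, abs_of_pos hσ]
  gcongr
  exact abs_pathResidual_le Y θ ht i j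

theorem measurable_pathLik (Y : Fin n → Fin p → ℝ) (t : ℝ) :
    Measurable fun θ : FactorParam p k n => pathLik Y θ t := by
  unfold pathLik lik
  fun_prop

theorem measurable_scoreU (Y : Fin n → Fin p → ℝ) (t : ℝ) :
    Measurable fun θ : FactorParam p k n => scoreU Y θ t := by
  unfold scoreU
  fun_prop

end FactorModel

theorem log_bayes_factor_eq_path_sampling_integral {p k n : ℕ} (Y : Fin n → Fin p → ℝ)
    (P : MeasureTheory.Measure (FactorParam p k n)) [MeasureTheory.IsProbabilityMeasure P]
    (hQ : MeasureTheory.Integrable (fun θ => Qbound Y θ) P)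
    (M : ℝ) (hM : ∀ᵐ θ ∂P, ∀ t ∈ Set.Icc (0 : ℝ) 1, pathLik Y θ t ≤ M) :
    Real.log (∫ θ, pathLik Y θ 1 ∂P) - Real.log (∫ θ, pathLik Y θ 0 ∂P) =
      ∫ t in (0 : ℝ)..1,
        (∫ θ, scoreU Y θ t * pathLik Y θ t ∂P) / ∫ θ, pathLik Y θ t ∂P := by
  have hpos : ∀ (θ : FactorParam p k n) t, 0 < pathLik Y θ t := pathLik_pos Y
  have habs_le : ∀ t ∈ Icc (0 : ℝ) 1, |t| ≤ 1 := fun t ht => abs_le.2 ⟨by linarith [ht.1], ht.2⟩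
  refine log_integral_sub_log_integral_eq_intervalIntegral zero_le_one (G := fun _ => M)
    (H := fun θ => Qbound Y θ * M)
    (fun t _ => (measurable_pathLik Y t).aestronglyMeasurable)
    (fun t _ => ((measurable_scoreU Y t).mul (measurable_pathLik Y t)).aestronglyMeasurable)
    (fun t _ => ae_of_all _ fun θ => hpos θ t) ?_ (integrable_const M) ?_ (hQ.mul_const M)
    (ae_of_all _ fun θ t _ => hasDerivAt_pathLik Y θ t)
    (ae_of_all _ fun θ => ((continuous_scoreU Y θ).mul (continuous_pathLik Y θ)).continuousOn)
  · filter_upwards [hM] with θ hθ t ht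
    rw [Real.norm_of_nonneg (hpos θ t).le]
    exact hθ t ht
  · filter_upwards [hM] with θ hθ t ht
    have hU := abs_scoreU_le_Qbound Y θ (habs_le t ht)
    rw [norm_mul, Real.norm_eq_abs, Real.norm_of_nonneg (hpos θ t).le]
    exact mul_le_mul hU (hθ t ht) (hpos θ t).le ((abs_nonneg _).trans hU)
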